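/- Competitiveness is preserved by the reduction from double auctions to one-sided auctions: let k be the number of asks and c ≥ 1. Suppose a one-sided auction selects a set Sel of at most k elements of the combined collection of asks and bids whose total value is at least 1/c times the sum of the k largest values in that combined collection. If the selected bids are processed one at a time in a fixed order, matching each selected bid b to the lowest-value currently unmatched ask a whenever a ≤ b and leaving b unmatched otherwise, then the resulting social welfare is at least W(Opt)/c, where W(Opt) is the maximum social welfare over all feasible allocations of the double auction. -/

import Mathlib

/-!
A feasible allocation leaves exactly `k` values with the traders (the matched bids and the
unmatched asks), all taken from the combined collection, so `W(Opt)` is at most the sum of the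
`k` largest values. Best-first, on the other hand, earns at least the value of the selection:
a selected bid it matches is paid for by the cheapest unmatched ask, which a selected ask may
swap for a still unmatched ask that is no cheaper; a selected bid it rejects is below every
unmatched ask, and as long as bids remain some unmatched ask is not selected.
-/

/-- Extract the minimum-value unmatched ask from a list, with a fixed
tie-breaking rule (earlier list positions are preferred). Returns the
minimum together with the remaining list. -/
noncomputable def extractMin : List ℝ → Option (ℝ × List ℝ)
  | [] => none
  | a :: as =>
    match extractMin as with
    | none => some (a, [])
    | some (m, rest) => if a ≤ m then some (a, as) else some (m, a :: rest)

/-- State of the Best-first (greedy) allocation: the currently unmatched asks,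
the matched (ask, bid) pairs in match order, and the unmatched bids. -/
structure BfState where
  unmatchedAsks : List ℝ
  matched : List (ℝ × ℝ)
  unmatchedBids : List ℝ

/-- One step of the Best-first allocation: when bid `b` arrives, match it to the
minimum unmatched ask `a` if `a ≤ b`; otherwise leave `b` unmatched. -/
noncomputable def bfStep (s : BfState) (b : ℝ) : BfState :=
  match extractMin s.unmatchedAsks with
  | some (a, rest) =>
      if a ≤ b then ⟨rest, s.matched ++ [(a, b)], s.unmatchedBids⟩
      else ⟨s.unmatchedAsks, s.matched, s.unmatchedBids ++ [b]⟩
  | none => ⟨s.unmatchedAsks, s.matched, s.unmatchedBids ++ [b]⟩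

/-- Run the Best-first allocation on the bids in arrival order. -/
noncomputable def bfRun (asks bids : List ℝ) : BfState :=
  bids.foldl bfStep ⟨asks, [], []⟩

/-- Insertion into an ascending-sorted list. -/
noncomputable def insertAsc (x : ℝ) : List ℝ → List ℝ
  | [] => [x]
  | y :: ys => if x ≤ y then x :: y :: ys else y :: insertAsc x ys

/-- Sort a list of reals in ascending order. -/
noncomputable def sortAsc (l : List ℝ) : List ℝ := l.foldr insertAsc []

/-- Sort a list of reals in descending order. -/
noncomputable def sortDesc (l : List ℝ) : List ℝ := (sortAsc l).reverse

/-- Match the i-th element of the first list with the i-th element of the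
second, stopping as soon as a pair is not matchable (`a ≤ b` fails). -/
noncomputable def matchPrefix : List ℝ → List ℝ → List (ℝ × ℝ)
  | a :: as, b :: bs => if a ≤ b then (a, b) :: matchPrefix as bs else []
  | _, _ => []

/-- The optimal allocation: match the highest bid with the lowest ask, the
second highest bid with the second lowest ask, and so on, stopping as soon as
a pair is not matchable. -/
noncomputable def optPairs (asks bids : List ℝ) : List (ℝ × ℝ) :=
  matchPrefix (sortAsc asks) (sortDesc bids)

/-- A feasible allocation: a partial matching (multiset of (ask, bid) pairs)
using each ask and each bid at most once, with `a ≤ b` for every matched pair. -/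
def IsFeasible (asks bids : List ℝ) (M : Multiset (ℝ × ℝ)) : Prop :=
  M.map Prod.fst ≤ (asks : Multiset ℝ) ∧
  M.map Prod.snd ≤ (bids : Multiset ℝ) ∧
  ∀ p ∈ M, p.1 ≤ p.2

/-- Social welfare of an allocation: sum of matched bid values plus the sum of
the values of the unmatched asks. -/
noncomputable def welfare (asks : List ℝ) (M : Multiset (ℝ × ℝ)) : ℝ :=
  (M.map Prod.snd).sum + ((asks : Multiset ℝ) - M.map Prod.fst).sum

/-- Social welfare of the Best-first allocation. -/
noncomputable def bfWelfare (asks bids : List ℝ) : ℝ :=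
  ((bfRun asks bids).matched.map Prod.snd).sum + (bfRun asks bids).unmatchedAsks.sum

/-- Maximum social welfare over all feasible allocations. -/
noncomputable def OptW (asks bids : List ℝ) : ℝ :=
  sSup {w : ℝ | ∃ M : Multiset (ℝ × ℝ), IsFeasible asks bids M ∧ w = welfare asks M}

lemma sortAsc_eq_insertionSort (l : List ℝ) : sortAsc l = l.insertionSort (· ≤ ·) := by
  have hins (x : ℝ) (l : List ℝ) : insertAsc x l = l.orderedInsert (· ≤ ·) x := by
    induction l with
    | nil => rfl
    | cons y ys ih => simp only [insertAsc, List.orderedInsert, ih]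
  induction l with
  | nil => rfl
  | cons y ys ih => simp only [sortAsc, List.foldr, List.insertionSort, hins] at ih ⊢; rw [ih]

lemma sortDesc_perm (l : List ℝ) : (sortDesc l).Perm l :=
  (List.reverse_perm _).trans (sortAsc_eq_insertionSort l ▸ List.perm_insertionSort _ l)

lemma sortDesc_pairwise (l : List ℝ) : (sortDesc l).Pairwise (· ≥ ·) := by
  rw [sortDesc, List.pairwise_reverse, sortAsc_eq_insertionSort]
  exact List.pairwise_insertionSort _ l

theorem Multiset.exists_cons_le_of_card_lt {α : Type*} {S T : Multiset α} (hST : S ≤ T)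
    (hcard : Multiset.card S < Multiset.card T) : ∃ y ∈ T, y ::ₘ S ≤ T := by
  obtain ⟨y, hy⟩ := Multiset.lt_iff_cons_le.mp (lt_of_le_of_ne hST (by rintro rfl; omega))
  exact ⟨y, Multiset.mem_of_le hy (Multiset.mem_cons_self y S), hy⟩

section SubmultisetSums

variable {α : Type*} [AddCommMonoid α] [LinearOrder α] [IsOrderedAddMonoid α]

theorem Multiset.sum_le_sum_take_of_le {D : List α} (hD : D.Pairwise (· ≥ ·))
    {S : Multiset α} (hS : S ≤ D) : S.sum ≤ (D.take (Multiset.card S)).sum := by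
  induction D generalizing S with
  | nil => simp [Multiset.le_zero.mp (by simpa using hS)]
  | cons x D ih =>
    obtain rfl | ⟨s, hs⟩ := S.empty_or_exists_mem
    · simp
    obtain ⟨hxD, hD⟩ := List.pairwise_cons.mp hD
    have key : ∃ y ∈ S, y ≤ x ∧ S.erase y ≤ D := by
      by_cases hx : x ∈ S
      · exact ⟨x, hx, le_rfl, by simpa using Multiset.erase_le_erase x hS⟩
      · have hSD : S ≤ D := (Multiset.le_cons_of_notMem hx).mp (by simpa using hS)
        exact ⟨s, hs, hxD s (by simpa using Multiset.mem_of_le hSD hs),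
          (Multiset.erase_le s S).trans hSD⟩
    obtain ⟨y, hy, hyx, hyD⟩ := key
    have hcard : Multiset.card S = Multiset.card (S.erase y) + 1 := by
      rw [← Multiset.card_cons, Multiset.cons_erase hy]
    rw [← Multiset.sum_erase hy, hcard, List.take_succ_cons, List.sum_cons]
    exact add_le_add hyx (ih hD hyD)

/-- Exchange argument: trading the least element `a` for another element of `r` only helps. -/
theorem Multiset.exists_le_sum_le_of_le_cons {a : α} {r S : Multiset α} (hS : S ≤ a ::ₘ r)
    (hmin : ∀ y ∈ r, a ≤ y) (hcard : Multiset.card S ≤ Multiset.card r) :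
    ∃ S' ≤ r, Multiset.card S' = Multiset.card S ∧ S.sum ≤ S'.sum := by
  by_cases ha : a ∈ S
  · have hSa : S.erase a ≤ r := by simpa using Multiset.erase_le_erase a hS
    have hcard' : Multiset.card (S.erase a) + 1 = Multiset.card S := by
      rw [← Multiset.card_cons, Multiset.cons_erase ha]
    obtain ⟨y, hy, hyr⟩ := Multiset.exists_cons_le_of_card_lt hSa (by omega)
    refine ⟨y ::ₘ S.erase a, hyr, by rw [Multiset.card_cons, hcard'], ?_⟩
    rw [← Multiset.cons_erase ha, Multiset.sum_cons, Multiset.erase_cons_head, Multiset.sum_cons]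
    exact add_le_add_left (hmin y hy) _
  · exact ⟨S, (Multiset.le_cons_of_notMem ha).mp hS, rfl, le_rfl⟩

end SubmultisetSums

lemma welfare_le_sum_take {asks bids : List ℝ} {M : Multiset (ℝ × ℝ)}
    (hM : IsFeasible asks bids M) :
    welfare asks M ≤ ((sortDesc (asks ++ bids)).take asks.length).sum := by
  obtain ⟨hfst, hsnd, -⟩ := hM
  -- The welfare is the sum of the `k` values held after trade: matched bids and unmatched asks.
  set W := M.map Prod.snd + ((asks : Multiset ℝ) - M.map Prod.fst)
  have hcardW : Multiset.card W = asks.length := by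
    have := Multiset.card_le_card hfst
    simp only [W, Multiset.card_add, Multiset.card_sub hfst, Multiset.card_map,
      Multiset.coe_card] at this ⊢
    omega
  have hW : W ≤ (sortDesc (asks ++ bids) : Multiset ℝ) := by
    rw [Multiset.coe_eq_coe.mpr (sortDesc_perm _), ← Multiset.coe_add, add_comm]
    exact add_le_add hsnd tsub_le_self
  have := Multiset.sum_le_sum_take_of_le (sortDesc_pairwise _) hW
  rwa [hcardW, Multiset.sum_add] at this

lemma optW_le_sum_take (asks bids : List ℝ) :
    OptW asks bids ≤ ((sortDesc (asks ++ bids)).take asks.length).sum := by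
  refine csSup_le ⟨welfare asks 0, 0, ⟨by simp, by simp, by simp⟩, rfl⟩ ?_
  rintro w ⟨M, hM, rfl⟩
  exact welfare_le_sum_take hM

lemma extractMin_eq_none {l : List ℝ} (h : extractMin l = none) : l = [] := by
  cases l with
  | nil => rfl
  | cons x xs =>
    rw [extractMin] at h
    rcases hm : extractMin xs with _ | ⟨m, r⟩ <;> simp only [hm, reduceCtorEq] at h
    split_ifs at h

lemma extractMin_spec {l : List ℝ} {a : ℝ} {rest : List ℝ}
    (h : extractMin l = some (a, rest)) : l.Perm (a :: rest) ∧ ∀ y ∈ rest, a ≤ y := by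
  induction l generalizing a rest with
  | nil => simp [extractMin] at h
  | cons x xs ih =>
    rw [extractMin] at h
    rcases hm : extractMin xs with _ | ⟨m, r⟩
    · obtain rfl := extractMin_eq_none hm
      simp only [hm, Option.some.injEq, Prod.mk.injEq] at h
      obtain ⟨rfl, rfl⟩ := h
      simp
    · obtain ⟨hperm, hmin⟩ := ih hm
      simp only [hm] at h
      split_ifs at h with hxm <;> simp only [Option.some.injEq, Prod.mk.injEq] at h <;>
        obtain ⟨rfl, rfl⟩ := h
      · exact ⟨.refl _, fun y hy => hxm.trans <| by
          rcases List.mem_cons.mp (hperm.subset hy) with rfl | hy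
          exacts [le_rfl, hmin y hy]⟩
      · refine ⟨(hperm.cons x).trans (.swap _ _ _), ?_⟩
        rintro y (_ | ⟨_, hy⟩)
        exacts [(not_le.mp hxm).le, hmin y hy]

noncomputable def BfState.welfare (s : BfState) : ℝ :=
  (s.matched.map Prod.snd).sum + s.unmatchedAsks.sum

lemma sum_le_sum_of_le_of_nonneg {asks : List ℝ} (hpos : ∀ a ∈ asks, 0 ≤ a)
    {S : Multiset ℝ} (hS : S ≤ asks) : S.sum ≤ asks.sum := by
  obtain ⟨u, hu⟩ := Multiset.le_iff_exists_add.mp hS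
  have hu_nonneg : 0 ≤ u.sum := Multiset.sum_nonneg fun x hx =>
    hpos x (Multiset.mem_coe.mp (hu ▸ Multiset.mem_add.mpr (Or.inr hx)))
  rw [← Multiset.sum_coe, hu, Multiset.sum_add]
  linarith

theorem matched_sum_add_le_welfare_foldl_bfStep (bids : List ℝ) (s : BfState)
    (S : Multiset ℝ) (hpos : ∀ a ∈ s.unmatchedAsks, 0 ≤ a) (hS : S ≤ s.unmatchedAsks)
    (hcard : Multiset.card S + bids.length ≤ s.unmatchedAsks.length) :
    (s.matched.map Prod.snd).sum + S.sum + bids.sum ≤ (bids.foldl bfStep s).welfare := by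
  induction bids generalizing s S with
  | nil => simpa [BfState.welfare] using sum_le_sum_of_le_of_nonneg hpos hS
  | cons b bs ih =>
    obtain ⟨asks, matched, unmatchedBids⟩ := s
    simp only [List.length_cons] at hcard
    rcases hm : extractMin asks with _ | ⟨a, rest⟩
    · simp [extractMin_eq_none hm] at hcard
    obtain ⟨hperm, hmin⟩ := extractMin_spec hm
    have hasks : (asks : Multiset ℝ) = a ::ₘ rest := Multiset.coe_eq_coe.mpr hperm
    by_cases hab : a ≤ b
    · have hstep : bfStep ⟨asks, matched, unmatchedBids⟩ b =
          ⟨rest, matched ++ [(a, b)], unmatchedBids⟩ := by simp [bfStep, hm, hab]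
      obtain ⟨S', hS'rest, hS'card, hSS'⟩ := Multiset.exists_le_sum_le_of_le_cons
        (hasks ▸ hS) hmin (by simp [hperm.length_eq] at hcard ⊢; omega)
      have := ih ⟨rest, matched ++ [(a, b)], unmatchedBids⟩ S' (fun x hx => hpos x (hperm.symm.subset (List.mem_cons_of_mem a hx)))
        hS'rest (by simp [hS'card, hperm.length_eq] at hcard ⊢; omega)
      simp only [List.foldl_cons, hstep, List.map_append, List.sum_append, List.map_cons,
        List.map_nil, List.sum_cons, List.sum_nil] at this ⊢
      linarith
    · have hstep : bfStep ⟨asks, matched, unmatchedBids⟩ b =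
          ⟨asks, matched, unmatchedBids ++ [b]⟩ := by simp [bfStep, hm, hab]
      -- A rejected bid is below every ask, so an ask outside `S` makes up for it.
      obtain ⟨y, hy, hyS⟩ := Multiset.exists_cons_le_of_card_lt hS (by simp; omega)
      have hby : b ≤ y := by
        rw [hasks, Multiset.mem_cons] at hy
        rcases hy with rfl | hy
        exacts [(not_le.mp hab).le, (not_le.mp hab).le.trans (hmin y hy)]
      have := ih ⟨asks, matched, unmatchedBids ++ [b]⟩ (y ::ₘ S) hpos hyS (by simp; omega)
      simp only [List.foldl_cons, hstep, Multiset.sum_cons, List.sum_cons] at this ⊢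
      linarith

lemma sum_add_sum_le_bfWelfare {asks bids : List ℝ} {S : Multiset ℝ}
    (hpos : ∀ a ∈ asks, 0 ≤ a) (hS : S ≤ asks)
    (hcard : Multiset.card S + bids.length ≤ asks.length) :
    S.sum + bids.sum ≤ bfWelfare asks bids := by
  simpa [bfWelfare, BfState.welfare, bfRun] using matched_sum_add_le_welfare_foldl_bfStep bids ⟨asks, [], []⟩ S hpos hS hcard

theorem reduction_preserves_competitiveness_general (c : ℝ) (hc : 1 ≤ c)
    (asks bids selBids : List ℝ) (selAsks : Multiset ℝ)
    (ha : ∀ a ∈ asks, 0 ≤ a)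
    (hselA : selAsks ≤ (asks : Multiset ℝ))
    (hcard : Multiset.card selAsks + selBids.length ≤ asks.length)
    (hsel : ((sortDesc (asks ++ bids)).take asks.length).sum / c ≤
      selAsks.sum + selBids.sum) :
    OptW asks bids / c ≤ bfWelfare asks selBids :=
  calc OptW asks bids / c
      ≤ ((sortDesc (asks ++ bids)).take asks.length).sum / c :=
        div_le_div_of_nonneg_right (optW_le_sum_take asks bids) (zero_le_one.trans hc)
    _ ≤ selAsks.sum + selBids.sum := hsel
    _ ≤ bfWelfare asks selBids := sum_add_sum_le_bfWelfare ha hselA hcard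

/-- Competitiveness is preserved by the reduction: if a
one-sided auction selects at most `k` elements (asks `selAsks` and bids
`selBids`) of the combined collection whose total value is at least `1/c`
times the sum of the `k` largest values in that collection (`k` the number of
asks, `c ≥ 1`), then greedily matching the selected bids in order to the
lowest-value unmatched asks yields social welfare at least `W(Opt)/c`. -/
theorem reduction_preserves_competitiveness (c : ℝ) (hc : 1 ≤ c)
    (asks bids selBids : List ℝ) (selAsks : Multiset ℝ)
    (ha : ∀ a ∈ asks, 0 ≤ a) (hb : ∀ b ∈ bids, 0 ≤ b)
    (hselA : selAsks ≤ (asks : Multiset ℝ))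
    (hselB : (selBids : Multiset ℝ) ≤ (bids : Multiset ℝ))
    (hcard : Multiset.card selAsks + selBids.length ≤ asks.length)
    (hsel : ((sortDesc (asks ++ bids)).take asks.length).sum / c ≤
      selAsks.sum + selBids.sum) :
    OptW asks bids / c ≤ bfWelfare asks selBids :=
  reduction_preserves_competitiveness_general c hc asks bids selBids selAsks ha hselA hcard hsel
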